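/- arXiv:1504.05349 — 4 statements merged into one kernel-verified Lean document; each statement's English description precedes it below -/
import Mathlib

section
/- The minimum subspace distance of the h-folded subspace code FS[h; n_t, k] equals 2(n_t - ceil(k/h) + 1). In particular, any two distinct codewords (n_t-dimensional subspaces generated by distinct message polynomials f, g of q-degree less than k) have intersection of dimension at most ceil(k/h) - 1. -/
/-!
The codeword `C_f` is spanned by the `nt` rows `v_f(j)`, whose first coordinates `α^{jh}` are
linearly independent; so `dim C_f = nt` and a vector of `C_f` determines its coefficients `a`.
If `∑ a_j v_f(j)` also lies in `C_g`, it has the same coefficients there, so the linearized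
polynomial `f - g` vanishes at the `h` elements `∑_j a_j α^{jh+i}`. As `a` ranges over
`C_f ∩ C_g` these span a subspace of `ker (f - g)` of dimension `h · dim (C_f ∩ C_g)`, because the
powers `α^t`, `t < h nt ≤ m`, are independent. A nonzero linearized polynomial of `q`-degree
`< k` has at most `q^{k-1}` roots, hence `h · dim (C_f ∩ C_g) ≤ k - 1`. The bound is attained by
`g = 0` and a nonzero `f` vanishing at `α^t` for `t < ⌊(k-1)/h⌋ h`, which exists because these
are fewer than `k` linear conditions on the `k` coefficients of `f`.
-/

/-- The subspace distance `d_S(U,V) = dim U + dim V - 2 dim (U ⊓ V)`. -/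
noncomputable def sDist {Fq V : Type*} [Field Fq] [AddCommGroup V] [Module Fq V]
    (U W : Submodule Fq V) : ℕ :=
  Module.finrank Fq U + Module.finrank Fq W -
    2 * Module.finrank Fq (U ⊓ W : Submodule Fq V)

/-- The codeword of the `h`-folded subspace code `FS[h; nt, k]` associated to a
linearized message polynomial `f` (given by its coefficients): the `F_q`-row
space of the `nt` vectors `(α^{jh}, f(α^{jh}), f(α^{jh+1}), …, f(α^{(j+1)h-1}))`. -/
noncomputable def fsCodeword {Fq Fqm : Type*} [Field Fq] [Field Fqm] [Algebra Fq Fqm]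
    (q h nt k : ℕ) (α : Fqm) (f : Fin k → Fqm) :
    Submodule Fq (Fin (h + 1) → Fqm) :=
  Submodule.span Fq (Set.range fun j : Fin nt =>
    Fin.cons (α ^ ((j : ℕ) * h))
      (fun i : Fin h => ∑ l : Fin k, f l * (α ^ ((j : ℕ) * h + (i : ℕ))) ^ q ^ (l : ℕ)))

open Polynomial Module LinearMap

section Roots

variable {K L : Type*} [Field K] [Field L] [Module K L] {W : Submodule K L} {P : L[X]}

theorem Submodule.finite_of_forall_isRoot (hP : P ≠ 0) (hW : ∀ x ∈ W, P.IsRoot x) :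
    Finite W :=
  ((finite_setOfPred_isRoot hP).subset hW).to_subtype

theorem Submodule.finrank_le_of_forall_isRoot [Fintype K] (hP : P ≠ 0)
    (hW : ∀ x ∈ W, P.IsRoot x) {d : ℕ} (hd : P.natDegree ≤ Fintype.card K ^ d) :
    finrank K W ≤ d := by
  have := Submodule.finite_of_forall_isRoot hP hW
  have : Fintype W := Fintype.ofFinite W
  have hcard : Fintype.card W ≤ P.natDegree := by
    simpa using card_le_degree_of_subset_roots (Z := Finset.univ.map (.subtype (· ∈ W)))
      fun x hx => (mem_roots hP).mpr (hW x (by simpa using hx))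
  rw [Module.card_eq_pow_finrank (K := K)] at hcard
  exact (Nat.pow_le_pow_iff_right Fintype.one_lt_card).mp (hcard.trans hd)

end Roots

section Linearized

variable (K : Type*) {L : Type*} [Field K] [Fintype K]

noncomputable def linearizedMap [CommRing L] [Algebra K L] {k : ℕ} (c : Fin k → L) :
    L →ₗ[K] L :=
  ∑ l : Fin k, mulLeft K (c l) ∘ₗ (FiniteField.frobeniusAlgHom K L ^ (l : ℕ)).toLinearMap

theorem linearizedMap_apply [CommRing L] [Algebra K L] {k : ℕ} (c : Fin k → L) (x : L) :
    linearizedMap K c x = ∑ l : Fin k, c l * x ^ Fintype.card K ^ (l : ℕ) := by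
  simp [linearizedMap, AlgHom.coe_pow, FiniteField.coe_frobeniusAlgHom, pow_iterate]

theorem linearizedMap_zero [CommRing L] [Algebra K L] {k : ℕ} :
    linearizedMap K (0 : Fin k → L) = 0 := by
  ext x
  simp [linearizedMap_apply]

theorem linearizedMap_sub [CommRing L] [Algebra K L] {k : ℕ} (c d : Fin k → L) :
    linearizedMap K (c - d) = linearizedMap K c - linearizedMap K d := by
  ext x
  simp [linearizedMap_apply, sub_mul]

noncomputable def linearizedPolynomial [CommRing L] {k : ℕ} (c : Fin k → L) : L[X] :=
  ∑ l : Fin k, C (c l) * X ^ Fintype.card K ^ (l : ℕ)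

theorem eval_linearizedPolynomial [CommRing L] [Algebra K L] {k : ℕ} (c : Fin k → L) (x : L) :
    (linearizedPolynomial K c).eval x = linearizedMap K c x := by
  simp [linearizedPolynomial, linearizedMap_apply, eval_finsetSum]

theorem coeff_linearizedPolynomial [CommRing L] {k : ℕ} (c : Fin k → L) (l : Fin k) :
    (linearizedPolynomial K c).coeff (Fintype.card K ^ (l : ℕ)) = c l := by
  have hinj : Function.Injective fun n : ℕ => Fintype.card K ^ n :=
    Nat.pow_right_injective (Nat.succ_le_of_lt Fintype.one_lt_card)
  rw [linearizedPolynomial, finsetSum_coeff, Finset.sum_eq_single l]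
  · simp
  · intro l' _ hl'
    simp [coeff_X_pow, hinj.ne (Fin.val_injective.ne hl').symm]
  · simp

theorem linearizedPolynomial_ne_zero [CommRing L] {k : ℕ} {c : Fin k → L} (hc : c ≠ 0) :
    linearizedPolynomial K c ≠ 0 := by
  obtain ⟨l, hl⟩ := Function.ne_iff.mp hc
  exact fun h0 => hl (by rw [← coeff_linearizedPolynomial K c l, h0, coeff_zero, Pi.zero_apply])

theorem natDegree_linearizedPolynomial_le [CommRing L] {k : ℕ} (c : Fin k → L) :
    (linearizedPolynomial K c).natDegree ≤ Fintype.card K ^ (k - 1) := by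
  refine natDegree_sum_le_of_forall_le _ _ fun l _ => ?_
  refine (natDegree_C_mul_le _ _).trans <| (natDegree_X_pow_le _).trans ?_
  exact Nat.pow_le_pow_right Fintype.card_pos (by omega)

variable [Field L] [Algebra K L] {k : ℕ} {c : Fin k → L}

theorem isRoot_linearizedPolynomial_of_mem_ker {x : L} (hx : x ∈ ker (linearizedMap K c)) :
    (linearizedPolynomial K c).IsRoot x := by
  rw [IsRoot, eval_linearizedPolynomial, mem_ker.mp hx]

theorem finite_ker_linearizedMap (hc : c ≠ 0) : Module.Finite K (ker (linearizedMap K c)) :=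
  have := Submodule.finite_of_forall_isRoot (linearizedPolynomial_ne_zero K hc)
    fun _ => isRoot_linearizedPolynomial_of_mem_ker K
  Module.Finite.of_finite

theorem finrank_ker_linearizedMap_le (hc : c ≠ 0) :
    finrank K (ker (linearizedMap K c)) ≤ k - 1 :=
  Submodule.finrank_le_of_forall_isRoot (linearizedPolynomial_ne_zero K hc)
    (fun _ => isRoot_linearizedPolynomial_of_mem_ker K) (natDegree_linearizedPolynomial_le K c)

theorem exists_linearizedMap_eq_zero {τ : Type*} [Fintype τ] (z : τ → L)
    (hτ : Fintype.card τ < k) : ∃ c : Fin k → L, c ≠ 0 ∧ ∀ t, linearizedMap K c (z t) = 0 := by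
  let M : Matrix τ (Fin k) L := Matrix.of fun t l => z t ^ Fintype.card K ^ (l : ℕ)
  obtain ⟨c, hc, hc0⟩ := (Submodule.ne_bot_iff _).mp <|
    M.mulVecLin.ker_ne_bot_of_finrank_lt (by simpa using hτ)
  refine ⟨c, hc0, fun t => ?_⟩
  have := congrFun (mem_ker.mp hc) t
  simpa [linearizedMap_apply, M, Matrix.mulVec, dotProduct, mul_comm] using this

end Linearized

section FoldedSpan

variable {K L ι : Type*} [Field K] [AddCommGroup L] [Module K L] {h : ℕ}

def foldedRow (x : ι → L) (y : ι × Fin h → L) (F : L →ₗ[K] L) (j : ι) : Fin (h + 1) → L :=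
  Fin.cons (x j) fun i => F (y (j, i))

def foldedSpan (x : ι → L) (y : ι × Fin h → L) (F : L →ₗ[K] L) : Submodule K (Fin (h + 1) → L) :=
  Submodule.span K (Set.range (foldedRow x y F))

def foldedKernel [Fintype ι] (y : ι × Fin h → L) (W : Submodule K L) : Submodule K (ι → K) :=
  ⨅ i : Fin h, W.comap (Fintype.linearCombination K fun j => y (j, i))

variable {x : ι → L} {y : ι × Fin h → L}

theorem linearIndependent_foldedRow (hx : LinearIndependent K x) (F : L →ₗ[K] L) :
    LinearIndependent K (foldedRow x y F) :=
  LinearIndependent.of_comp (proj 0) hx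

variable [Fintype ι]

instance (x : ι → L) (y : ι × Fin h → L) (F : L →ₗ[K] L) :
    Module.Finite K (foldedSpan x y F) :=
  Module.Finite.span_of_finite K (Set.finite_range _)

theorem finrank_foldedSpan (hx : LinearIndependent K x) (F : L →ₗ[K] L) :
    finrank K (foldedSpan x y F) = Fintype.card ι :=
  finrank_span_eq_card (linearIndependent_foldedRow hx F)

theorem inf_foldedSpan_le_map (hx : LinearIndependent K x) (F G : L →ₗ[K] L) :
    foldedSpan x y F ⊓ foldedSpan x y G ≤
      (foldedKernel y (ker (F - G))).map (Fintype.linearCombination K (foldedRow x y F)) := by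
  rintro v ⟨hvF, hvG⟩
  rw [foldedSpan, ← Fintype.range_linearCombination] at hvF hvG
  obtain ⟨a, rfl⟩ := hvF
  obtain ⟨b, hab⟩ := hvG
  have hba : b = a := hx.fintypeLinearCombination_injective <| by
    simpa [Fintype.linearCombination_apply, Finset.sum_apply, foldedRow] using congrFun hab 0
  subst hba
  refine ⟨b, Submodule.mem_iInf _ |>.mpr fun i => ?_, rfl⟩
  have := congrFun hab i.succ
  simp only [Fintype.linearCombination_apply, Finset.sum_apply, Pi.smul_apply, foldedRow,
    Fin.cons_succ] at this
  simp [Fintype.linearCombination_apply, smul_sub, Finset.sum_sub_distrib, this]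

theorem finrank_foldedKernel_mul_le (hy : LinearIndependent K y) (W : Submodule K L)
    [Module.Finite K W] : finrank K (foldedKernel y W) * h ≤ finrank K W := by
  set B := foldedKernel y W
  let R : (Fin h → B) →ₗ[K] ι × Fin h → K :=
    LinearMap.pi fun p => proj p.1 ∘ₗ B.subtype ∘ₗ proj p.2
  let Ψ := Fintype.linearCombination K y ∘ₗ R
  have hR : Function.Injective R := fun c c' hcc' => funext fun i => Subtype.ext <| funext fun j =>
    congrFun hcc' (j, i)
  have hΨ : Function.Injective Ψ := hy.fintypeLinearCombination_injective.comp hR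
  have hrange : range Ψ ≤ W := by
    rintro _ ⟨c, rfl⟩
    have hc : ∀ i, Fintype.linearCombination K (fun j => y (j, i)) (c i) ∈ W := fun i =>
      Submodule.mem_iInf _ |>.mp (c i).2 i
    simpa [Ψ, R, Fintype.linearCombination_apply, Fintype.sum_prod_type,
      Finset.sum_comm (γ := ι)] using Submodule.sum_mem W fun i _ => hc i
  calc finrank K B * h
    _ = finrank K (Fin h → B) := by
      rw [Module.finrank_pi_fintype, Finset.sum_const, Finset.card_univ, Fintype.card_fin,
        smul_eq_mul, mul_comm]
    _ = finrank K (range Ψ) := (finrank_range_of_inj hΨ).symm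
    _ ≤ finrank K W := Submodule.finrank_mono hrange

theorem finrank_inf_foldedSpan_mul_le (hx : LinearIndependent K x) (hy : LinearIndependent K y)
    (F G : L →ₗ[K] L) [Module.Finite K (ker (F - G))] :
    finrank K (foldedSpan x y F ⊓ foldedSpan x y G : Submodule K _) * h ≤
      finrank K (ker (F - G)) :=
  calc _ ≤ finrank K (foldedKernel y (ker (F - G))) * h :=
        Nat.mul_le_mul_right h <| (Submodule.finrank_mono (inf_foldedSpan_le_map hx F G)).trans
          (Submodule.finrank_map_le _ _)
    _ ≤ _ := finrank_foldedKernel_mul_le hy _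

theorem card_le_finrank_inf_foldedSpan (hx : LinearIndependent K x) {κ : Type*} [Fintype κ]
    (e : κ ↪ ι) {F G : L →ₗ[K] L} (hFG : ∀ j i, F (y (e j, i)) = G (y (e j, i))) :
    Fintype.card κ ≤ finrank K (foldedSpan x y F ⊓ foldedSpan x y G : Submodule K _) := by
  have hsub : Submodule.span K (Set.range (foldedRow x y F ∘ e)) ≤
      foldedSpan x y F ⊓ foldedSpan x y G := by
    rw [Submodule.span_le]
    rintro _ ⟨j, rfl⟩
    have hrow : foldedRow x y F (e j) = foldedRow x y G (e j) := by
      simp only [foldedRow, hFG]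
    refine ⟨Submodule.subset_span ⟨e j, rfl⟩, ?_⟩
    rw [Function.comp_apply, hrow]
    exact Submodule.subset_span ⟨e j, rfl⟩
  calc Fintype.card κ = _ :=
        (finrank_span_eq_card ((linearIndependent_foldedRow hx F).comp e e.injective)).symm
    _ ≤ _ := Submodule.finrank_mono hsub

end FoldedSpan

instance {K L : Type*} [Field K] [Field L] [Algebra K L] (q h nt k : ℕ) (α : L)
    (f : Fin k → L) : Module.Finite K (fsCodeword (Fq := K) q h nt k α f) :=
  Module.Finite.span_of_finite K (Set.finite_range _)

theorem sDist_eq_of_finrank_eq {K V : Type*} [Field K] [AddCommGroup V] [Module K V]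
    {U W : Submodule K V} [Module.Finite K U] {n : ℕ} (hU : finrank K U = n)
    (hW : finrank K W = n) : sDist U W = 2 * (n - finrank K (U ⊓ W : Submodule K V)) := by
  have := Submodule.finrank_mono (inf_le_left : U ⊓ W ≤ U)
  unfold sDist
  omega

section PowersOfPrimitive

variable {K L : Type*} [Semiring K] [Semiring L] [Module K L] {m h nt : ℕ} {α : L}

theorem linearIndependent_pow_fold (hα : LinearIndependent K fun i : Fin m => α ^ (i : ℕ))
    (hhn : h * nt ≤ m) :
    LinearIndependent K fun p : Fin nt × Fin h => α ^ ((p.1 : ℕ) * h + p.2) := by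
  have hcast : nt * h ≤ m := by rwa [Nat.mul_comm]
  convert hα.comp _ ((Fin.castLE_injective hcast).comp finProdFinEquiv.injective) using 2 with p
  simp [finProdFinEquiv_apply_val, Nat.add_comm, Nat.mul_comm]

theorem linearIndependent_pow_mul (hα : LinearIndependent K fun i : Fin m => α ^ (i : ℕ))
    (hh : 0 < h) (hhn : h * nt ≤ m) :
    LinearIndependent K fun j : Fin nt => α ^ ((j : ℕ) * h) := by
  simpa [Function.comp_def] using (linearIndependent_pow_fold hα hhn).comp
    (fun j => (j, ⟨0, hh⟩)) fun _ _ hj => congrArg Prod.fst hj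

end PowersOfPrimitive

section FoldedSubspaceCode

variable {K L : Type*} [Field K] [Fintype K] [Field L] [Algebra K L] {m h nt k : ℕ} {α : L}

theorem fsCodeword_eq_foldedSpan (f : Fin k → L) :
    fsCodeword (Fq := K) (Fintype.card K) h nt k α f =
      foldedSpan (fun j : Fin nt => α ^ ((j : ℕ) * h))
        (fun p : Fin nt × Fin h => α ^ ((p.1 : ℕ) * h + p.2)) (linearizedMap K f) := by
  unfold fsCodeword foldedSpan foldedRow
  simp only [linearizedMap_apply]

variable (hα : LinearIndependent K fun i : Fin m => α ^ (i : ℕ)) (hh : 0 < h) (hhn : h * nt ≤ m)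
include hα hh hhn

theorem finrank_fsCodeword (f : Fin k → L) :
    finrank K (fsCodeword (Fq := K) (Fintype.card K) h nt k α f) = nt := by
  have hx := linearIndependent_pow_mul hα hh hhn
  rw [fsCodeword_eq_foldedSpan, finrank_foldedSpan hx, Fintype.card_fin]

theorem finrank_inf_fsCodeword_le {f g : Fin k → L} (hfg : f ≠ g) :
    finrank K (fsCodeword (Fq := K) (Fintype.card K) h nt k α f ⊓
      fsCodeword (Fq := K) (Fintype.card K) h nt k α g : Submodule K _) ≤ (k - 1) / h := by
  have hfg' : f - g ≠ 0 := sub_ne_zero.mpr hfg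
  have hfin := finite_ker_linearizedMap K hfg'
  have hker := finrank_ker_linearizedMap_le K hfg'
  rw [linearizedMap_sub] at hfin hker
  have hx := linearIndependent_pow_mul hα hh hhn
  have hy := linearIndependent_pow_fold hα hhn
  rw [Nat.le_div_iff_mul_le hh, fsCodeword_eq_foldedSpan, fsCodeword_eq_foldedSpan]
  exact (finrank_inf_foldedSpan_mul_le hx hy _ _).trans hker

theorem exists_le_finrank_inf_fsCodeword {d : ℕ} (hd : d ≤ nt) (hdk : d * h < k) :
    ∃ f : Fin k → L, f ≠ 0 ∧ d ≤ finrank K (fsCodeword (Fq := K) (Fintype.card K) h nt k α f ⊓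
      fsCodeword (Fq := K) (Fintype.card K) h nt k α 0 : Submodule K _) := by
  obtain ⟨f, hf, hfz⟩ := exists_linearizedMap_eq_zero K
    (fun p : Fin d × Fin h => α ^ ((p.1 : ℕ) * h + p.2)) (by simpa using hdk)
  have hx := linearIndependent_pow_mul hα hh hhn
  refine ⟨f, hf, ?_⟩
  rw [fsCodeword_eq_foldedSpan, fsCodeword_eq_foldedSpan]
  simpa using card_le_finrank_inf_foldedSpan hx (Fin.castLEEmb hd)
    fun j i => by simpa [linearizedMap_zero] using hfz (j, i)

end FoldedSubspaceCode

theorem fs_code_min_distance_general {Fq Fqm : Type*} [Field Fq] [Fintype Fq]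
    [Field Fqm] [Algebra Fq Fqm]
    (q m : ℕ) (hq : q = Fintype.card Fq)
    (h nt k : ℕ) (hh : 1 ≤ h) (hk : 1 ≤ k) (hkm : k ≤ h * nt)
    (hhn : h * nt ≤ m)
    (α : Fqm) (hα : LinearIndependent Fq fun i : Fin m => α ^ (i : ℕ)) :
    (∀ f g : Fin k → Fqm, f ≠ g →
      Module.finrank Fq
          (fsCodeword q h nt k α f ⊓ fsCodeword q h nt k α g :
            Submodule Fq (Fin (h + 1) → Fqm)) ≤ (k + h - 1) / h - 1) ∧
    (∀ f g : Fin k → Fqm, f ≠ g →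
      2 * (nt - (k + h - 1) / h + 1) ≤
        sDist (Fq := Fq) (fsCodeword q h nt k α f) (fsCodeword q h nt k α g)) ∧
    (∃ f g : Fin k → Fqm, f ≠ g ∧
      sDist (Fq := Fq) (fsCodeword q h nt k α f) (fsCodeword q h nt k α g) =
        2 * (nt - (k + h - 1) / h + 1)) := by
  subst hq
  have hceil : (k + h - 1) / h = (k - 1) / h + 1 := by
    rw [show k + h - 1 = k - 1 + h by omega, Nat.add_div_right _ hh]
  have hlt : (k - 1) / h < nt := (Nat.div_lt_iff_lt_mul hh).mpr (by rw [Nat.mul_comm]; omega)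
  have hrank := finrank_fsCodeword (k := k) hα hh hhn
  refine ⟨fun f g hfg => ?_, fun f g hfg => ?_, ?_⟩
  · rw [hceil, Nat.add_sub_cancel]
    exact finrank_inf_fsCodeword_le hα hh hhn hfg
  · rw [sDist_eq_of_finrank_eq (hrank f) (hrank g)]
    have := finrank_inf_fsCodeword_le hα hh hhn hfg
    omega
  · obtain ⟨f, hf, hlower⟩ := exists_le_finrank_inf_fsCodeword hα hh hhn hlt.le
      ((Nat.div_mul_le_self (k - 1) h).trans_lt (Nat.sub_lt hk one_pos))
    refine ⟨f, 0, hf, ?_⟩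
    rw [sDist_eq_of_finrank_eq (hrank f) (hrank 0),
      le_antisymm (finrank_inf_fsCodeword_le hα hh hhn hf) hlower]
    omega

/-- The minimum subspace distance of the `h`-folded subspace code `FS[h; nt, k]`
is `2(nt - ⌈k/h⌉ + 1)`; in particular any two distinct codewords have
intersection of dimension at most `⌈k/h⌉ - 1`. -/
theorem fs_code_min_distance {Fq Fqm : Type*} [Field Fq] [Fintype Fq]
    [Field Fqm] [Fintype Fqm] [Algebra Fq Fqm]
    (q m : ℕ) (hq : q = Fintype.card Fq) (hm : Module.finrank Fq Fqm = m)
    (h nt k : ℕ) (hh : 1 ≤ h) (hnt : 1 ≤ nt) (hk : 1 ≤ k) (hkm : k ≤ h * nt)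
    (hhn : h * nt ≤ m)
    (α : Fqm) (hα : LinearIndependent Fq fun i : Fin m => α ^ (i : ℕ)) :
    (∀ f g : Fin k → Fqm, f ≠ g →
      Module.finrank Fq
          (fsCodeword q h nt k α f ⊓ fsCodeword q h nt k α g :
            Submodule Fq (Fin (h + 1) → Fqm)) ≤ (k + h - 1) / h - 1) ∧
    (∀ f g : Fin k → Fqm, f ≠ g →
      2 * (nt - (k + h - 1) / h + 1) ≤
        sDist (Fq := Fq) (fsCodeword q h nt k α f) (fsCodeword q h nt k α g)) ∧
    (∃ f g : Fin k → Fqm, f ≠ g ∧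
      sDist (Fq := Fq) (fsCodeword q h nt k α f) (fsCodeword q h nt k α g) =
        2 * (nt - (k + h - 1) / h + 1)) :=
  fs_code_min_distance_general q m hq h nt k hh hk hkm hhn α hα
end

section
/- The number of n_t-dimensional subspaces of F_q^N at subspace distance exactly t from a fixed n_r-dimensional subspace V is q^{u(t-u)} · [n_r choose u]_q · [N - n_r choose t-u]_q when u = (n_r - n_t + t)/2 is a nonnegative integer, and 0 when n_r - n_t + t is odd. -/
/-- The Gaussian binomial coefficient `[n choose k]_q`, via the `q`-Pascal rule. -/
def gaussBinom (q : ℕ) : ℕ → ℕ → ℕ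
  | _, 0 => 1
  | 0, _ + 1 => 0
  | n + 1, k + 1 => gaussBinom q n k + q ^ (k + 1) * gaussBinom q n (k + 1)

/-- Gaussian binomial coefficient with integer lower index (zero when negative). -/
def gaussBinomZ (q n : ℕ) (k : ℤ) : ℕ :=
  if 0 ≤ k then gaussBinom q n k.toNat else 0

/-! Split the subspaces `W` of dimension `nt` by `X = U ⊓ W`. Since
`d_S(U, W) = nr + nt - 2 dim X`, the sphere of radius `t` consists of the `W` with
`dim X = nr - u`. There are `[nr choose nr - u]_q = [nr choose u]_q` such `X ≤ U` (the symmetry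
comes from duality), and the `W` with `U ⊓ W = X` correspond to the `(t - u)`-dimensional
subspaces of `V ⧸ X` meeting `U ⧸ X` trivially.

A subspace meeting an `a`-dimensional `A` trivially is the graph of a linear map from a subspace
of a complement `C` of `A` into `A`, so the `m`-dimensional ones number `q^{am}` times the
`m`-dimensional subspaces of `C`; with `A = U ⧸ X` this gives
`q^{u(t-u)} [N - nr choose t - u]_q`. The same graph count for a line `A` yields the `q`-Pascal
rule defining `[n choose k]_q`. -/

open Module Submodule

theorem gaussBinom_zero_right (q n : ℕ) : gaussBinom q n 0 = 1 := by
  cases n <;> rfl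

theorem gaussBinom_eq_zero_of_lt (q : ℕ) : ∀ {n k : ℕ}, n < k → gaussBinom q n k = 0
  | 0, _ + 1, _ => rfl
  | n + 1, k + 1, h => by
    simp only [gaussBinom, gaussBinom_eq_zero_of_lt q (by omega : n < k),
      gaussBinom_eq_zero_of_lt q (by omega : n < k + 1), mul_zero, add_zero]

theorem gaussBinomZ_eq_zero {q n : ℕ} {k : ℤ} (hk : k < 0 ∨ n < k) :
    gaussBinomZ q n k = 0 := by
  unfold gaussBinomZ
  split_ifs with h
  · exact gaussBinom_eq_zero_of_lt q (by omega)
  · rfl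

theorem Nat.card_subtype_and_add_card_subtype_not_and {α : Type*} [Finite α] (p q : α → Prop) :
    Nat.card {x // q x ∧ p x} + Nat.card {x // ¬ q x ∧ p x} = Nat.card {x // p x} := by
  classical
  rw [← Nat.card_sum]
  exact Nat.card_congr ((Equiv.sumCongr
    ((Equiv.subtypeEquivRight fun _ => and_comm).trans
      (Equiv.subtypeSubtypeEquivSubtypeInter p q).symm)
    ((Equiv.subtypeEquivRight fun _ => and_comm).trans
      (Equiv.subtypeSubtypeEquivSubtypeInter p (¬ q ·)).symm)).trans (Equiv.sumCompl _))

instance Submodule.finite {R M : Type*} [Semiring R] [AddCommMonoid M] [Module R M] [Finite M] :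
    Finite (Submodule R M) :=
  Finite.of_injective _ SetLike.coe_injective

section LinearAlgebra

variable {K V V' : Type*} [Field K] [AddCommGroup V] [Module K V] [AddCommGroup V'] [Module K V']

theorem Submodule.finrank_map_add_finrank_inf_ker [FiniteDimensional K V] (f : V →ₗ[K] V')
    (W : Submodule K V) :
    finrank K (W.map f) + finrank K ↥(W ⊓ LinearMap.ker f) = finrank K W := by
  have h := LinearMap.finrank_range_add_finrank_ker (f.domRestrict W)
  rw [LinearMap.range_domRestrict, LinearMap.ker_domRestrict] at h
  rwa [← finrank_map_subtype_eq, map_comap_subtype] at h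

theorem Submodule.finrank_comap_of_surjective [FiniteDimensional K V] {f : V →ₗ[K] V'}
    (hf : Function.Surjective f) (W : Submodule K V') :
    finrank K (W.comap f) = finrank K W + finrank K (LinearMap.ker f) := by
  have h := finrank_map_add_finrank_inf_ker f (W.comap f)
  rw [map_comap_eq_of_surjective hf, inf_eq_right.mpr (LinearMap.ker_le_comap f)] at h
  exact h.symm

theorem Submodule.inf_eq_bot_iff_not_le_of_finrank_eq_one {L : Submodule K V}
    (hL : finrank K L = 1) (W : Submodule K V) : W ⊓ L = ⊥ ↔ ¬ L ≤ W := by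
  rw [(isAtom_iff_finrank_eq_one.mpr hL).not_le_iff_disjoint, disjoint_iff, inf_comm]

end LinearAlgebra

section Graph

variable {K E F : Type*} [Field K] [AddCommGroup E] [Module K E] [AddCommGroup F] [Module K F]

theorem LinearPMap.graph_inf_ker_fst (f : E →ₗ.[K] F) :
    f.graph ⊓ (LinearMap.fst K E F).ker = ⊥ := by
  rw [eq_bot_iff]
  rintro ⟨x, y⟩ ⟨hxy, hx : x = 0⟩
  subst hx
  simp [f.graph_fst_eq_zero_snd hxy rfl]

theorem Submodule.toLinearPMap_graph_eq_of_inf_ker_fst {g : Submodule K (E × F)}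
    (hg : g ⊓ (LinearMap.fst K E F).ker = ⊥) : g.toLinearPMap.graph = g :=
  g.toLinearPMap_graph_eq fun x hx hx1 => by
    have hx0 : x ∈ g ⊓ (LinearMap.fst K E F).ker := ⟨hx, hx1⟩
    rw [hg, mem_bot] at hx0
    simp [hx0]

noncomputable def graphEquivLinearPMap :
    {g : Submodule K (E × F) // g ⊓ (LinearMap.fst K E F).ker = ⊥} ≃ (E →ₗ.[K] F) where
  toFun g := g.1.toLinearPMap
  invFun f := ⟨f.graph, f.graph_inf_ker_fst⟩
  left_inv g := Subtype.ext (Submodule.toLinearPMap_graph_eq_of_inf_ker_fst g.2)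
  right_inv f := LinearPMap.eq_of_eq_graph
    (Submodule.toLinearPMap_graph_eq_of_inf_ker_fst f.graph_inf_ker_fst)

theorem LinearPMap.finrank_graph [FiniteDimensional K E] [FiniteDimensional K F]
    (f : E →ₗ.[K] F) : finrank K f.graph = finrank K f.domain := by
  have h := finrank_map_add_finrank_inf_ker (LinearMap.fst K E F) f.graph
  rwa [f.graph_map_fst_eq_domain, f.graph_inf_ker_fst, finrank_bot, add_zero, eq_comm] at h

theorem Module.natCard_linearMap [Finite K] [FiniteDimensional K E] [FiniteDimensional K F] :
    Nat.card (E →ₗ[K] F) = Nat.card K ^ (finrank K E * finrank K F) := by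
  rw [Module.natCard_eq_pow_finrank (K := K), Module.finrank_linearMap]

theorem card_graph_finrank_eq [Finite K] [FiniteDimensional K E] [FiniteDimensional K F]
    (m : ℕ) :
    Nat.card {g : Submodule K (E × F) //
        g ⊓ (LinearMap.fst K E F).ker = ⊥ ∧ finrank K g = m} =
      Nat.card {D : Submodule K E // finrank K D = m} * Nat.card K ^ (m * finrank K F) := by
  have : Finite E := Module.finite_of_finite K
  have := Fintype.ofFinite {D : Submodule K E // finrank K D = m}
  let toSigma : {f : E →ₗ.[K] F // finrank K f.domain = m} ≃
      Σ D : {D : Submodule K E // finrank K D = m}, D.1 →ₗ[K] F :=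
    { toFun f := ⟨⟨f.1.domain, f.2⟩, f.1.toFun⟩
      invFun f := ⟨⟨f.1.1, f.2⟩, f.1.2⟩
      left_inv _ := rfl
      right_inv _ := rfl }
  have e := (Equiv.subtypeSubtypeEquivSubtypeInter _
    (fun g : Submodule K (E × F) => finrank K g = m)).symm.trans
    ((graphEquivLinearPMap.subtypeEquiv (q := fun f => finrank K f.domain = m) fun g => by
      change _ ↔ finrank K g.1.toLinearPMap.domain = m
      rw [← LinearPMap.finrank_graph, Submodule.toLinearPMap_graph_eq_of_inf_ker_fst g.2]).trans
      toSigma)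
  have (D : Submodule K E) : Finite (D →ₗ[K] F) := Module.finite_of_finite K
  rw [Nat.card_congr e, Nat.card_sigma]
  simp only [Module.natCard_linearMap]
  rw [Finset.sum_congr rfl fun D _ => by rw [D.2], Finset.sum_const, Finset.card_univ,
    smul_eq_mul, ← Nat.card_eq_fintype_card]

end Graph

section Count

variable {K V V' : Type*} [Field K] [AddCommGroup V] [Module K V] [AddCommGroup V'] [Module K V']

theorem Submodule.card_map_linearEquiv (e : V ≃ₗ[K] V') (P : Submodule K V' → Prop) :
    Nat.card {W : Submodule K V // P (W.map (e : V →ₗ[K] V'))} =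
      Nat.card {W : Submodule K V' // P W} :=
  Nat.card_congr ((orderIsoMapComap e).toEquiv.subtypeEquiv fun _ => Iff.rfl)

theorem Submodule.card_le_eq_card_quotient (X : Submodule K V) (P : Submodule K V → Prop) :
    Nat.card {W : Submodule K V // X ≤ W ∧ P W} =
      Nat.card {W : Submodule K (V ⧸ X) // P (W.comap X.mkQ)} :=
  Nat.card_congr
    { toFun W := ⟨W.1.map X.mkQ, by rw [comap_map_mkQ, sup_eq_right.mpr W.2.1]; exact W.2.2⟩
      invFun W := ⟨W.1.comap X.mkQ, X.le_comap_mkQ W.1, W.2⟩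
      left_inv W := Subtype.ext ((comap_map_mkQ X W.1).trans (sup_eq_right.mpr W.2.1))
      right_inv W := Subtype.ext (map_comap_eq_of_surjective X.mkQ_surjective W.1) }

theorem Submodule.card_inf_eq_bot_finrank_eq_of_isCompl [Finite K] [FiniteDimensional K V]
    {C A : Submodule K V} (h : IsCompl C A) (m : ℕ) :
    Nat.card {W : Submodule K V // W ⊓ A = ⊥ ∧ finrank K W = m} =
      Nat.card {D : Submodule K C // finrank K D = m} * Nat.card K ^ (m * finrank K A) := by
  let e := prodEquivOfIsCompl C A h
  have hA : (LinearMap.ker (LinearMap.fst K C A)).map (e : C × A →ₗ[K] V) = A := by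
    ext x
    simp [e]
  rw [← card_graph_finrank_eq, ← card_map_linearEquiv e]
  congr! 3 with g
  rw [LinearEquiv.finrank_map_eq, ← Submodule.map_eq_bot_iff (e := e), map_inf _ e.injective, hA]

theorem Submodule.card_finrank_eq_zero [FiniteDimensional K V] :
    Nat.card {W : Submodule K V // finrank K W = 0} = 1 :=
  Nat.card_eq_one_iff_unique.mpr
    ⟨⟨fun W W' =>
      Subtype.ext ((finrank_eq_zero.mp W.2).trans (finrank_eq_zero.mp W'.2).symm)⟩,
      ⟨⟨⊥, finrank_bot K V⟩⟩⟩

theorem Submodule.card_finrank_succ_eq_of_isCompl [Finite K] [FiniteDimensional K V]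
    {L C : Submodule K V} (hLC : IsCompl L C) (hL : finrank K L = 1) (k : ℕ) :
    Nat.card {W : Submodule K V // finrank K W = k + 1} =
      Nat.card {W : Submodule K (V ⧸ L) // finrank K W = k} +
        Nat.card K ^ (k + 1) * Nat.card {D : Submodule K C // finrank K D = k + 1} := by
  have : Finite V := Module.finite_of_finite K
  have hker : finrank K (LinearMap.ker L.mkQ) = 1 := by rw [ker_mkQ, hL]
  rw [← Nat.card_subtype_and_add_card_subtype_not_and _ (L ≤ ·), card_le_eq_card_quotient]
  simp only [finrank_comap_of_surjective L.mkQ_surjective, hker, Nat.add_right_cancel_iff,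
    ← inf_eq_bot_iff_not_le_of_finrank_eq_one hL]
  rw [card_inf_eq_bot_finrank_eq_of_isCompl hLC.symm, hL, mul_one, mul_comm]

theorem Submodule.card_finrank_eq [Finite K] [FiniteDimensional K V] (k : ℕ) :
    Nat.card {W : Submodule K V // finrank K W = k} =
      gaussBinom (Nat.card K) (finrank K V) k := by
  generalize hn : finrank K V = n
  induction n generalizing V k with
  | zero =>
    cases k with
    | zero => exact card_finrank_eq_zero
    | succ k =>
      have : IsEmpty {W : Submodule K V // finrank K W = k + 1} :=
        ⟨fun W => by have := W.1.finrank_le; omega⟩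
      exact Nat.card_of_isEmpty
  | succ n ih =>
    cases k with
    | zero => rw [card_finrank_eq_zero, gaussBinom_zero_right]
    | succ k =>
      obtain ⟨v, hv⟩ :=
        (finrank_pos_iff_exists_ne_zero (R := K)).mp (by omega : 0 < finrank K V)
      have hL := finrank_span_singleton (K := K) hv
      obtain ⟨C, hC⟩ := (K ∙ v).exists_isCompl
      have := finrank_add_eq_of_isCompl hC
      have := finrank_quotient_add_finrank (K ∙ v)
      rw [card_finrank_succ_eq_of_isCompl hC hL, ih k (by omega), ih (k + 1) (by omega)]
      rfl

theorem Submodule.card_finrank_eq_card_dual [FiniteDimensional K V] {k : ℕ}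
    (hk : k ≤ finrank K V) :
    Nat.card {W : Submodule K V // finrank K W = k} =
      Nat.card {W : Submodule K (Dual K V) // finrank K W = finrank K V - k} :=
  Nat.card_congr
    { toFun W := ⟨W.1.dualAnnihilator, by
        have := Subspace.finrank_add_finrank_dualAnnihilator_eq W.1
        omega⟩
      invFun W := ⟨W.1.dualCoannihilator, by
        have := Subspace.finrank_add_finrank_dualCoannihilator_eq W.1
        omega⟩
      left_inv W := Subtype.ext Subspace.dualAnnihilator_dualCoannihilator_eq
      right_inv W := Subtype.ext Subspace.dualCoannihilator_dualAnnihilator_eq }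

theorem Submodule.card_le_finrank_eq (U : Submodule K V) (d : ℕ) :
    Nat.card {X : Submodule K V // X ≤ U ∧ finrank K X = d} =
      Nat.card {X : Submodule K U // finrank K X = d} :=
  Nat.card_congr <| (Equiv.subtypeSubtypeEquivSubtypeInter _
    (fun X : Submodule K V => finrank K X = d)).symm.trans
    ((MapSubtype.orderIso U).toEquiv.subtypeEquiv fun X => by
      rw [← finrank_map_subtype_eq U X]; rfl).symm

theorem Submodule.card_inf_eq_bot_finrank_eq [Finite K] [FiniteDimensional K V]
    (A : Submodule K V) (m : ℕ) :
    Nat.card {W : Submodule K V // W ⊓ A = ⊥ ∧ finrank K W = m} =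
      gaussBinom (Nat.card K) (finrank K V - finrank K A) m * Nat.card K ^ (m * finrank K A) := by
  obtain ⟨C, hC⟩ := A.exists_isCompl
  have hCA : finrank K C = finrank K V - finrank K A := by
    have := finrank_add_eq_of_isCompl hC
    omega
  rw [card_inf_eq_bot_finrank_eq_of_isCompl hC.symm, card_finrank_eq, hCA]

theorem Submodule.card_inf_eq_finrank_eq [Finite K] [FiniteDimensional K V]
    {U X : Submodule K V} (hXU : X ≤ U) {m : ℕ} (hm : finrank K X ≤ m) :
    Nat.card {W : Submodule K V // U ⊓ W = X ∧ finrank K W = m} =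
      gaussBinom (Nat.card K) (finrank K V - finrank K U) (m - finrank K X) *
        Nat.card K ^ ((m - finrank K X) * (finrank K U - finrank K X)) := by
  have hUbar : finrank K (U.map X.mkQ) = finrank K U - finrank K X := by
    have := finrank_map_add_finrank_inf_ker X.mkQ U
    rw [ker_mkQ, inf_eq_right.mpr hXU] at this
    omega
  have hquot : finrank K (V ⧸ X) = finrank K V - finrank K X := by
    have := finrank_quotient_add_finrank X
    omega
  calc Nat.card {W : Submodule K V // U ⊓ W = X ∧ finrank K W = m}
      = Nat.card {W : Submodule K V // X ≤ W ∧ U ⊓ W = X ∧ finrank K W = m} :=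
        Nat.card_congr <| Equiv.subtypeEquivRight fun W =>
          ⟨fun h => ⟨h.1 ▸ inf_le_right, h⟩, fun h => h.2⟩
    _ = Nat.card {W : Submodule K (V ⧸ X) // W ⊓ U.map X.mkQ = ⊥ ∧
          finrank K W = m - finrank K X} := by
        rw [card_le_eq_card_quotient]
        congr! 3 with W
        have hinf : U ⊓ W.comap X.mkQ = X ↔ W ⊓ U.map X.mkQ = ⊥ := by
          rw [← (comap_injective_of_surjective X.mkQ_surjective).eq_iff, comap_inf,
            comap_map_mkQ, sup_eq_right.mpr hXU, comap_bot, ker_mkQ, inf_comm]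
        rw [finrank_comap_of_surjective X.mkQ_surjective, ker_mkQ, hinf]
        exact and_congr_right fun _ => by omega
    _ = _ := by
        have := Submodule.finrank_mono hXU
        have := U.finrank_le
        rw [card_inf_eq_bot_finrank_eq, hUbar, hquot]
        congr 2
        omega

theorem Submodule.card_finrank_inf_eq [Finite K] [FiniteDimensional K V] (U : Submodule K V)
    {d m : ℕ} (hdU : d ≤ finrank K U) (hdm : d ≤ m) :
    Nat.card {W : Submodule K V // finrank K ↥(U ⊓ W) = d ∧ finrank K W = m} =
      gaussBinom (Nat.card K) (finrank K U) (finrank K U - d) *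
        gaussBinom (Nat.card K) (finrank K V - finrank K U) (m - d) *
          Nat.card K ^ ((m - d) * (finrank K U - d)) := by
  let byMeet : {W : Submodule K V // finrank K ↥(U ⊓ W) = d ∧ finrank K W = m} ≃
      Σ X : {X : Submodule K V // X ≤ U ∧ finrank K X = d},
        {W : Submodule K V // U ⊓ W = X.1 ∧ finrank K W = m} :=
    { toFun W := ⟨⟨U ⊓ W.1, inf_le_left, W.2.1⟩, W.1, rfl, W.2.2⟩
      invFun p := ⟨p.2.1, by rw [p.2.2.1]; exact p.1.2.2, p.2.2.2⟩
      left_inv _ := rfl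
      right_inv := by
        rintro ⟨⟨X, hX⟩, W, hUW, hW⟩
        obtain rfl : U ⊓ W = X := hUW
        rfl }
  have : Finite V := Module.finite_of_finite K
  have := Fintype.ofFinite {X : Submodule K V // X ≤ U ∧ finrank K X = d}
  rw [Nat.card_congr byMeet, Nat.card_sigma, Finset.sum_congr rfl fun X _ => by
      rw [card_inf_eq_finrank_eq X.2.1 (X.2.2.trans_le hdm), X.2.2],
    Finset.sum_const, Finset.card_univ, smul_eq_mul, ← Nat.card_eq_fintype_card,
    card_le_finrank_eq, card_finrank_eq_card_dual hdU, card_finrank_eq, Subspace.dual_finrank_eq,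
    mul_assoc]

end Count

section Sphere

variable {K V : Type*} [Field K] [AddCommGroup V] [Module K V] [FiniteDimensional K V]

theorem sDist_eq_iff {U W : Submodule K V} {t : ℕ} :
    sDist U W = t ↔ 2 * finrank K ↥(U ⊓ W) + t = finrank K U + finrank K W := by
  have := Submodule.finrank_mono (inf_le_left : U ⊓ W ≤ U)
  have := Submodule.finrank_mono (inf_le_right : U ⊓ W ≤ W)
  unfold sDist
  omega

theorem card_sDist_eq (U : Submodule K V) {d m t : ℕ} (hd : 2 * d + t = finrank K U + m) :
    Nat.card {W : Submodule K V // finrank K W = m ∧ sDist U W = t} =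
      Nat.card {W : Submodule K V // finrank K ↥(U ⊓ W) = d ∧ finrank K W = m} :=
  Nat.card_congr <| Equiv.subtypeEquivRight fun W => by rw [sDist_eq_iff]; omega

theorem isEmpty_sDist_eq (U : Submodule K V) {m t : ℕ}
    (h : ∀ d ≤ finrank K U, d ≤ m → 2 * d + t ≠ finrank K U + m) :
    IsEmpty {W : Submodule K V // finrank K W = m ∧ sDist U W = t} :=
  ⟨fun ⟨W, hW, hdist⟩ => by
    subst hW
    exact h _ (finrank_mono inf_le_left) (finrank_mono inf_le_right) (sDist_eq_iff.mp hdist)⟩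

end Sphere

theorem sphere_size_subspace_metric_general {Fq : Type*} [Field Fq] [Fintype Fq]
    (q : ℕ) (hq : q = Fintype.card Fq)
    (N nr nt t : ℕ)
    (U : Submodule Fq (Fin N → Fq)) (hU : Module.finrank Fq U = nr) :
    (∀ u : ℤ, 0 ≤ u → 2 * u = (nr : ℤ) - nt + t →
      (Nat.card {W : Submodule Fq (Fin N → Fq) //
          Module.finrank Fq W = nt ∧ sDist U W = t} : ℚ) =
        (q : ℚ) ^ (u * (t - u)) * (gaussBinomZ q nr u : ℚ) *
          (gaussBinomZ q (N - nr) ((t : ℤ) - u) : ℚ)) ∧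
    (Odd ((nr : ℤ) - nt + t) →
      Nat.card {W : Submodule Fq (Fin N → Fq) //
        Module.finrank Fq W = nt ∧ sDist U W = t} = 0) := by
  rw [← Nat.card_eq_fintype_card] at hq
  subst hq
  refine ⟨fun u hu0 hu => ?_, fun ⟨j, hj⟩ => ?_⟩
  · lift u to ℕ using hu0
    by_cases hut : u ≤ nr ∧ u ≤ t
    · rw [card_sDist_eq U (d := nr - u) (by omega), card_finrank_inf_eq U (by omega) (by omega),
        hU, finrank_fin_fun, gaussBinomZ, gaussBinomZ, if_pos (by omega), if_pos (by omega),
        show ((t : ℤ) - u).toNat = t - u by omega, Int.toNat_natCast,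
        show nr - (nr - u) = u by omega, show nt - (nr - u) = t - u by omega,
        show ((t : ℤ) - u) = ((t - u : ℕ) : ℤ) by omega, ← Nat.cast_mul, zpow_natCast]
      push_cast
      ring
    · have := isEmpty_sDist_eq U (m := nt) (t := t) fun d _ _ => by omega
      rcases not_and_or.mp hut with hnr | ht
      · rw [gaussBinomZ_eq_zero (Or.inr (by omega))]
        simp
      · rw [gaussBinomZ_eq_zero (k := (t : ℤ) - u) (Or.inl (by omega))]
        simp
  · have := isEmpty_sDist_eq U (m := nt) (t := t) fun d _ => by omega
    exact Nat.card_of_isEmpty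

/-- The number of `nt`-dimensional subspaces of `F_q^N` at subspace distance
exactly `t` from a fixed `nr`-dimensional subspace `U` is
`q^{u(t-u)} [nr choose u]_q [N-nr choose t-u]_q` when `u = (nr-nt+t)/2` is a
nonnegative integer, and `0` when `nr - nt + t` is odd. -/
theorem sphere_size_subspace_metric {Fq : Type*} [Field Fq] [Fintype Fq]
    (q : ℕ) (hq : q = Fintype.card Fq)
    (N nr nt t : ℕ) (hnr : nr ≤ N) (hnt : nt ≤ N)
    (U : Submodule Fq (Fin N → Fq)) (hU : Module.finrank Fq U = nr) :
    (∀ u : ℤ, 0 ≤ u → 2 * u = (nr : ℤ) - nt + t →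
      (Nat.card {W : Submodule Fq (Fin N → Fq) //
          Module.finrank Fq W = nt ∧ sDist U W = t} : ℚ) =
        (q : ℚ) ^ (u * (t - u)) * (gaussBinomZ q nr u : ℚ) *
          (gaussBinomZ q (N - nr) ((t : ℤ) - u) : ℚ)) ∧
    (Odd ((nr : ℤ) - nt + t) →
      Nat.card {W : Submodule Fq (Fin N → Fq) //
        Module.finrank Fq W = nt ∧ sDist U W = t} = 0) :=
  sphere_size_subspace_metric_general q hq N nr nt t U hU
end

section
/- If γ + sδ ≤ (s(n_t(h-s+1) - (k-1)) - μ)/(h-s+1) and D = ceil((n_r(h-s+1) + s(k-1) + μ)/(s+1)) with n_r = n_t + γ - δ, then both D ≤ (n_t - δ)(h-s+1) and Ds ≥ γ(h-s+1) + s(k-1) + μ hold; in particular the interpolation solution space dimension satisfies d_I ≥ s(D-k+1) - γ(h-s+1) ≥ μ. -/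
/-!
Write `H = h - s + 1` and `K = k - 1`. Clearing the denominator, the radius condition reads
`γH + sδH + sK + μ ≤ s·nt·H`, and `D` is characterised by
`nr·H + sK + μ ≤ (s+1)D ≤ nr·H + sK + μ + s`. Substituting `nr = nt + γ - δ` into the upper
bound and using the radius condition gives `(s+1)D ≤ (s+1)(nt-δ)H + s`, hence `D ≤ (nt-δ)H`.
Subtracting this from the lower bound leaves `sD ≥ γH + sK + μ`, which is the second claim and,
rearranged, the third.
-/

theorem Nat.le_mul_add_div_and_mul_add_div_le (a s : ℕ) :
    a ≤ (s + 1) * ((a + s) / (s + 1)) ∧ (s + 1) * ((a + s) / (s + 1)) ≤ a + s := by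
  refine ⟨?_, Nat.mul_div_le _ _⟩
  have := Nat.lt_div_mul_add (a := a + s) (Nat.succ_pos s)
  linarith

namespace UniqueDecoding

theorem radius_mul_le {γ δ s n K μ H : ℚ} (hH : 0 < H)
    (hrad : γ + s * δ ≤ (s * (n * H - K) - μ) / H) :
    γ * H + s * δ * H + s * K + μ ≤ s * n * H := by
  rw [le_div_iff₀ hH] at hrad
  linarith

theorem degree_le_of_radius {s D n γ δ H K μ : ℤ} (hs : 0 ≤ s)
    (hrad : γ * H + s * δ * H + s * K + μ ≤ s * n * H)
    (hD : (s + 1) * D ≤ (n + γ - δ) * H + s * K + μ + s) :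
    D ≤ (n - δ) * H := by
  by_contra! hlt
  have : (s + 1) * ((n - δ) * H + 1) ≤ (s + 1) * D :=
    mul_le_mul_of_nonneg_left hlt (by linarith)
  linarith

end UniqueDecoding

open UniqueDecoding in
theorem unique_decoding_radius_general (h nt k s μ γ δ nr D : ℕ)
    (hsh : s ≤ h) (hk : 1 ≤ k)
    (hnr : nr + δ = nt + γ)
    (hrad : (γ : ℚ) + s * δ ≤
      (s * ((nt : ℚ) * ((h : ℚ) - s + 1) - ((k : ℚ) - 1)) - μ) / ((h : ℚ) - s + 1))
    (hD : D = (nr * (h - s + 1) + s * (k - 1) + μ + s) / (s + 1)) :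
    (D : ℤ) ≤ ((nt : ℤ) - δ) * ((h : ℤ) - s + 1) ∧
    (D : ℤ) * s ≥ γ * ((h : ℤ) - s + 1) + s * ((k : ℤ) - 1) + μ ∧
    (s : ℤ) * ((D : ℤ) - k + 1) - γ * ((h : ℤ) - s + 1) ≥ μ := by
  have hH : (0 : ℚ) < h - s + 1 := by
    have : (s : ℚ) ≤ h := by exact_mod_cast hsh
    linarith
  have hradZ : (γ : ℤ) * (h - s + 1) + s * δ * (h - s + 1) + s * (k - 1) + μ
      ≤ s * nt * (h - s + 1) := by
    exact_mod_cast radius_mul_le hH hrad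
  obtain ⟨hlow, hupp⟩ :=
    Nat.le_mul_add_div_and_mul_add_div_le (nr * (h - s + 1) + s * (k - 1) + μ) s
  rw [← hD] at hlow hupp
  zify [hsh, hk] at hlow hupp
  rw [show (nr : ℤ) = nt + γ - δ by omega] at hlow hupp
  have hDle := degree_le_of_radius (by positivity) hradZ hupp
  have hDs : (γ : ℤ) * (h - s + 1) + s * (k - 1) + μ ≤ D * s := by linarith
  exact ⟨hDle, hDs, by linarith⟩

/-- If `γ + sδ ≤ (s(nt(h-s+1) - (k-1)) - μ)/(h-s+1)` and
`D = ⌈(nr(h-s+1) + s(k-1) + μ)/(s+1)⌉` with `nr = nt + γ - δ`, then both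
`D ≤ (nt - δ)(h-s+1)` and `Ds ≥ γ(h-s+1) + s(k-1) + μ` hold; in particular the
interpolation solution space dimension bound gives
`s(D-k+1) - γ(h-s+1) ≥ μ`. -/
theorem unique_decoding_radius (h nt k s μ γ δ nr D : ℕ)
    (hs : 1 ≤ s) (hsh : s ≤ h) (hk : 1 ≤ k) (hknt : k ≤ nt * (h - s + 1))
    (hμ : 1 ≤ μ) (hδ : δ ≤ nt) (hnr : nr + δ = nt + γ)
    (hrad : (γ : ℚ) + s * δ ≤
      (s * ((nt : ℚ) * ((h : ℚ) - s + 1) - ((k : ℚ) - 1)) - μ) / ((h : ℚ) - s + 1))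
    (hD : D = (nr * (h - s + 1) + s * (k - 1) + μ + s) / (s + 1)) :
    (D : ℤ) ≤ ((nt : ℤ) - δ) * ((h : ℤ) - s + 1) ∧
    (D : ℤ) * s ≥ γ * ((h : ℤ) - s + 1) + s * ((k : ℤ) - 1) + μ ∧
    (s : ℤ) * ((D : ℤ) - k + 1) - γ * ((h : ℤ) - s + 1) ≥ μ :=
  unique_decoding_radius_general h nt k s μ γ δ nr D hsh hk hnr hrad hD
end

section
/- The vectors of the form (α^{jh}, f(α^{jh}), ..., f(α^{(j+1)h-1})) for j = 0, ..., n_t - 1 are linearly independent over F_q, so every codeword of FS[h; n_t, k] is an n_t-dimensional subspace; moreover any F_q-linear combination sum_j λ_j (α^{jh}, f(α^{jh}), ..., f(α^{(j+1)h-1})) equals (x, f(x), f(αx), ..., f(α^{h-1}x)) where x = sum_j λ_j α^{jh}. -/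
/-! The map `x ↦ (x, f(x), f(αx), …, f(α^{h-1}x))` is `F_q`-linear, because each
`x ↦ x^{q^l}` is a power of the `F_q`-Frobenius, and it is injective through its first
coordinate. The `j`-th generator is its value at `α^{jh}`, and the `α^{jh}` are
independent as a subfamily of the independent powers `α^0, …, α^{m-1}`. -/

/-- The `j`-th generating vector
`(α^{jh}, f(α^{jh}), f(α^{jh+1}), …, f(α^{(j+1)h-1}))` of a codeword of the
folded subspace code, where `f` is the linearized polynomial with coefficients
`f l` (so `f(x) = ∑_l f_l x^{q^l}`). -/
noncomputable def fsVec {Fq Fqm : Type*} [Field Fq] [Field Fqm] [Algebra Fq Fqm]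
    (q h k : ℕ) (α : Fqm) (f : Fin k → Fqm) (j : ℕ) : Fin (h + 1) → Fqm :=
  Fin.cons (α ^ (j * h))
    (fun i : Fin h => ∑ l : Fin k, f l * (α ^ (j * h + (i : ℕ))) ^ q ^ (l : ℕ))

open FiniteField

theorem linearIndependent_pow_mul_of_mul_le {R A : Type*} [Semiring R] [Semiring A]
    [Module R A] {α : A} {m h n : ℕ} (hα : LinearIndependent R fun i : Fin m => α ^ (i : ℕ))
    (hh : 1 ≤ h) (hhn : h * n ≤ m) :
    LinearIndependent R fun j : Fin n => α ^ ((j : ℕ) * h) := by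
  have hlt (j : Fin n) : (j : ℕ) * h < m :=
    (Nat.mul_lt_mul_of_pos_right j.isLt hh).trans_le (Nat.mul_comm n h ▸ hhn)
  exact hα.comp (fun j : Fin n => ⟨(j : ℕ) * h, hlt j⟩) fun a b hab =>
    Fin.ext <| Nat.eq_of_mul_eq_mul_right hh (Fin.val_eq_of_eq hab)

section Linearized

variable (Fq : Type*) {K : Type*} [Field Fq] [Fintype Fq] [CommRing K] [Algebra Fq K]

noncomputable def linearizedPolyₗ {k : ℕ} (f : Fin k → K) : K →ₗ[Fq] K :=
  ∑ l : Fin k, f l • ((frobeniusAlgHom Fq K) ^ (l : ℕ)).toLinearMap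

@[simp]
theorem linearizedPolyₗ_apply {k : ℕ} (f : Fin k → K) (x : K) :
    linearizedPolyₗ Fq f x = ∑ l : Fin k, f l * x ^ Fintype.card Fq ^ (l : ℕ) := by
  simp [linearizedPolyₗ, LinearMap.sum_apply, coe_frobeniusAlgHom, pow_iterate]

noncomputable def foldedEvalₗ (h : ℕ) (α : K) {k : ℕ} (f : Fin k → K) :
    K →ₗ[Fq] Fin (h + 1) → K :=
  LinearMap.pi (Fin.cons LinearMap.id fun i : Fin h =>
    linearizedPolyₗ Fq f ∘ₗ LinearMap.mulLeft Fq (α ^ (i : ℕ)))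

theorem foldedEvalₗ_apply (h : ℕ) (α : K) {k : ℕ} (f : Fin k → K) (x : K) :
    foldedEvalₗ Fq h α f x =
      Fin.cons x fun i : Fin h =>
        ∑ l : Fin k, f l * (α ^ (i : ℕ) * x) ^ Fintype.card Fq ^ (l : ℕ) := by
  ext i
  cases i using Fin.cases <;> simp [foldedEvalₗ]

theorem foldedEvalₗ_injective (h : ℕ) (α : K) {k : ℕ} (f : Fin k → K) :
    Function.Injective (foldedEvalₗ Fq h α f) := fun x y hxy => by
  simpa [foldedEvalₗ_apply] using congrFun hxy 0

end Linearized

theorem fsVec_eq_foldedEvalₗ {Fq K : Type*} [Field Fq] [Fintype Fq] [Field K] [Algebra Fq K]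
    (h : ℕ) (α : K) {k : ℕ} (f : Fin k → K) (j : ℕ) :
    fsVec (Fq := Fq) (Fintype.card Fq) h k α f j = foldedEvalₗ Fq h α f (α ^ (j * h)) := by
  rw [foldedEvalₗ_apply, fsVec]
  simp only [pow_add, mul_comm]

theorem fs_codeword_dimension_and_combination_general {Fq Fqm : Type*}
    [Field Fq] [Fintype Fq] [Field Fqm] [Algebra Fq Fqm]
    (q m : ℕ) (hq : q = Fintype.card Fq)
    (h nt k : ℕ) (hh : 1 ≤ h) (hhn : h * nt ≤ m)
    (α : Fqm) (hα : LinearIndependent Fq fun i : Fin m => α ^ (i : ℕ))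
    (f : Fin k → Fqm) :
    LinearIndependent Fq (fun j : Fin nt => fsVec (Fq := Fq) q h k α f (j : ℕ)) ∧
    Module.finrank Fq
      (Submodule.span Fq (Set.range fun j : Fin nt => fsVec (Fq := Fq) q h k α f (j : ℕ))) = nt ∧
    ∀ lam : Fin nt → Fq,
      ((∑ j : Fin nt, lam j • fsVec (Fq := Fq) q h k α f (j : ℕ)) 0 =
        ∑ j : Fin nt, lam j • α ^ ((j : ℕ) * h)) ∧
      ∀ i : Fin h,
        (∑ j : Fin nt, lam j • fsVec (Fq := Fq) q h k α f (j : ℕ)) i.succ =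
          ∑ l : Fin k,
            f l * (α ^ (i : ℕ) * ∑ j : Fin nt, lam j • α ^ ((j : ℕ) * h)) ^ q ^ (l : ℕ) := by
  subst hq
  have hli : LinearIndependent Fq fun j : Fin nt =>
      fsVec (Fq := Fq) (Fintype.card Fq) h k α f j := by
    simpa only [fsVec_eq_foldedEvalₗ, Function.comp_def] using
      (linearIndependent_pow_mul_of_mul_le hα hh hhn).map' (foldedEvalₗ Fq h α f)
        (LinearMap.ker_eq_bot.mpr (foldedEvalₗ_injective Fq h α f))
  refine ⟨hli, by rw [finrank_span_eq_card hli, Fintype.card_fin], fun lam => ?_⟩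
  have hcomb : ∑ j : Fin nt, lam j • fsVec (Fq := Fq) (Fintype.card Fq) h k α f j =
      foldedEvalₗ Fq h α f (∑ j : Fin nt, lam j • α ^ ((j : ℕ) * h)) := by
    simp only [fsVec_eq_foldedEvalₗ, map_sum, map_smul]
  rw [hcomb, foldedEvalₗ_apply]
  exact ⟨rfl, fun i => rfl⟩

/-- The vectors `(α^{jh}, f(α^{jh}), …, f(α^{(j+1)h-1}))`, `j = 0, …, nt-1`, are
linearly independent over `F_q`, so every codeword of `FS[h; nt, k]` is an
`nt`-dimensional subspace; moreover any `F_q`-linear combination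
`∑_j λ_j (α^{jh}, f(α^{jh}), …, f(α^{(j+1)h-1}))` equals
`(x, f(x), f(αx), …, f(α^{h-1}x))` with `x = ∑_j λ_j α^{jh}`. -/
theorem fs_codeword_dimension_and_combination {Fq Fqm : Type*}
    [Field Fq] [Fintype Fq] [Field Fqm] [Fintype Fqm] [Algebra Fq Fqm]
    (q m : ℕ) (hq : q = Fintype.card Fq) (hm : Module.finrank Fq Fqm = m)
    (h nt k : ℕ) (hh : 1 ≤ h) (hnt : 1 ≤ nt) (hk : 1 ≤ k) (hhn : h * nt ≤ m)
    (α : Fqm) (hα : LinearIndependent Fq fun i : Fin m => α ^ (i : ℕ))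
    (f : Fin k → Fqm) :
    LinearIndependent Fq (fun j : Fin nt => fsVec (Fq := Fq) q h k α f (j : ℕ)) ∧
    Module.finrank Fq
      (Submodule.span Fq (Set.range fun j : Fin nt => fsVec (Fq := Fq) q h k α f (j : ℕ))) = nt ∧
    ∀ lam : Fin nt → Fq,
      ((∑ j : Fin nt, lam j • fsVec (Fq := Fq) q h k α f (j : ℕ)) 0 =
        ∑ j : Fin nt, lam j • α ^ ((j : ℕ) * h)) ∧
      ∀ i : Fin h,
        (∑ j : Fin nt, lam j • fsVec (Fq := Fq) q h k α f (j : ℕ)) i.succ =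
          ∑ l : Fin k,
            f l * (α ^ (i : ℕ) * ∑ j : Fin nt, lam j • α ^ ((j : ℕ) * h)) ^ q ^ (l : ℕ) :=
  fs_codeword_dimension_and_combination_general q m hq h nt k hh hhn α hα f
end
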